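/- arXiv:2409.03337 — 5 statements merged into one kernel-verified Lean document; each statement's English description precedes it below -/
import Mathlib

section
/- Under the hypotheses of the previous statement (|ψ_i| ≤ γ Σ_{j=1}^{i} g_{ij} |z_j| with γ = 1/(T-t)), define Φ² = Σ_{i=1}^{n} γ^{2(n-i)} ψ_i². Then Φ² ≤ d² γ² Σ_{j=1}^{n} γ^{2(n-j)} z_j², where d² = max_{1 ≤ j ≤ n} Σ_{i=j}^{n} (g_{ij}² · i) / γ₀^{2(i-j)} with γ₀ = 1/T. -/
open Finset in
/-- Lemma 1 of the paper: from `|ψ_i| ≤ γ ∑_{j≤i} g_{ij}|z_j|`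
with `γ = 1/(T-t)`, the weighted bound `Φ² ≤ d²γ² (L_n z)ᵀ(L_n z)` follows,
where `Φ² = ∑_i γ^{2(n-i)} ψ_i²` and
`d² = max_j ∑_{i≥j} g_{ij}² i / γ₀^{2(i-j)}`, `γ₀ = 1/T`. -/
theorem stmt_6 (n : ℕ) (hn : 0 < n) (T t : ℝ) (hT : 0 < T) (ht : t ∈ Set.Ico 0 T)
    (g : Fin n → Fin n → ℝ) (hg : ∀ i j, 0 ≤ g i j)
    (z ψ : Fin n → ℝ)
    (hψ : ∀ i : Fin n, |ψ i| ≤ (1 / (T - t)) *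
      ∑ j ∈ univ.filter (fun j => j ≤ i), g i j * |z j|)
    (d2 : ℝ)
    (hd2 : d2 = Finset.univ.sup'
      (Finset.univ_nonempty_iff.mpr (Fin.pos_iff_nonempty.mp hn))
      (fun j : Fin n => ∑ i ∈ univ.filter (fun i => j ≤ i),
        (g i j) ^ 2 * ((i : ℕ) + 1) / (1 / T) ^ (2 * ((i : ℕ) - (j : ℕ))))) :
    ∑ i : Fin n, (1 / (T - t)) ^ (2 * (n - 1 - (i : ℕ))) * (ψ i) ^ 2 ≤
      d2 * (1 / (T - t)) ^ 2 *
        ∑ j : Fin n, (1 / (T - t)) ^ (2 * (n - 1 - (j : ℕ))) * (z j) ^ 2 := by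
  obtain ⟨ht0, htT⟩ := ht
  have hTt : 0 < T - t := by linarith
  set γ : ℝ := 1 / (T - t) with hγ
  set γ0 : ℝ := 1 / T with hγ0
  have hγpos : 0 < γ := by positivity
  have hγ0pos : 0 < γ0 := by positivity
  have hle : γ0 ≤ γ := by
    apply one_div_le_one_div_of_le hTt; linarith
  -- Step A: pointwise Cauchy-Schwarz bound
  have stepA : ∀ i : Fin n, (ψ i) ^ 2 ≤
      γ ^ 2 * (((i : ℕ) + 1 : ℝ) * ∑ j ∈ univ.filter (fun j => j ≤ i),
        (g i j) ^ 2 * (z j) ^ 2) := by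
    intro i
    have hS : 0 ≤ ∑ j ∈ univ.filter (fun j => j ≤ i), g i j * |z j| := by
      apply Finset.sum_nonneg; intro j _; exact mul_nonneg (hg i j) (abs_nonneg _)
    have h1 : (ψ i) ^ 2 ≤ (γ * ∑ j ∈ univ.filter (fun j => j ≤ i), g i j * |z j|) ^ 2 := by
      rw [← sq_abs (ψ i)]
      exact pow_le_pow_left₀ (abs_nonneg _) (hψ i) 2
    have hcs : (∑ j ∈ univ.filter (fun j => j ≤ i), g i j * |z j|) ^ 2 ≤
        (((i : ℕ) + 1 : ℝ)) * ∑ j ∈ univ.filter (fun j => j ≤ i), (g i j)^2 * (z j)^2 := by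
      have := sq_sum_le_card_mul_sum_sq (s := univ.filter (fun j => j ≤ i))
        (f := fun j => g i j * |z j|)
      have hcard : (univ.filter (fun j => j ≤ i)).card = (i : ℕ) + 1 := by
        have he : univ.filter (fun j => j ≤ i) = Finset.Iic i := by
          ext j; simp
        rw [he, Fin.card_Iic]
      rw [hcard] at this
      calc (∑ j ∈ univ.filter (fun j => j ≤ i), g i j * |z j|) ^ 2
          ≤ (((i:ℕ)+1 : ℕ) : ℝ) * ∑ j ∈ univ.filter (fun j => j ≤ i), (g i j * |z j|)^2 :=
            this
        _ = (((i:ℕ)+1 : ℝ)) * ∑ j ∈ univ.filter (fun j => j ≤ i), (g i j)^2 * (z j)^2 := by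
            push_cast
            congr 1
            apply Finset.sum_congr rfl
            intro j _
            rw [mul_pow, sq_abs]
    calc (ψ i) ^ 2 ≤ (γ * ∑ j ∈ univ.filter (fun j => j ≤ i), g i j * |z j|) ^ 2 := h1
      _ = γ ^ 2 * (∑ j ∈ univ.filter (fun j => j ≤ i), g i j * |z j|) ^ 2 := by ring
      _ ≤ γ ^ 2 * (((i : ℕ) + 1 : ℝ) * ∑ j ∈ univ.filter (fun j => j ≤ i),
            (g i j) ^ 2 * (z j) ^ 2) := by
          apply mul_le_mul_of_nonneg_left hcs (by positivity)
  -- key power inequality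
  have hkey : ∀ i j : Fin n, j ≤ i →
      γ ^ (2 * (n - 1 - (i : ℕ))) ≤ γ ^ (2 * (n - 1 - (j : ℕ))) / γ0 ^ (2 * ((i:ℕ) - (j:ℕ))) := by
    intro i j hji
    rw [le_div_iff₀ (by positivity)]
    calc γ ^ (2 * (n - 1 - (i : ℕ))) * γ0 ^ (2 * ((i:ℕ) - (j:ℕ)))
        ≤ γ ^ (2 * (n - 1 - (i : ℕ))) * γ ^ (2 * ((i:ℕ) - (j:ℕ))) := by
          apply mul_le_mul_of_nonneg_left _ (by positivity)
          exact pow_le_pow_left₀ hγ0pos.le hle _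
      _ = γ ^ (2 * (n - 1 - (i : ℕ)) + 2 * ((i:ℕ) - (j:ℕ))) := (pow_add _ _ _).symm
      _ = γ ^ (2 * (n - 1 - (j : ℕ))) := by
          congr 1
          have hi := i.isLt
          have hj : (j : ℕ) ≤ (i : ℕ) := hji
          omega
  calc ∑ i : Fin n, γ ^ (2 * (n - 1 - (i : ℕ))) * (ψ i) ^ 2
      ≤ ∑ i : Fin n, ∑ j ∈ univ.filter (fun j => j ≤ i),
          γ ^ (2 * (n - 1 - (i : ℕ))) * (γ ^ 2 * (((i:ℕ)+1 : ℝ) * ((g i j)^2 * (z j)^2))) := by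
        apply Finset.sum_le_sum
        intro i _
        rw [← Finset.mul_sum]
        have := mul_le_mul_of_nonneg_left (stepA i)
          (a := γ ^ (2 * (n - 1 - (i : ℕ)))) (by positivity)
        calc γ ^ (2 * (n - 1 - (i : ℕ))) * (ψ i) ^ 2
            ≤ γ ^ (2 * (n - 1 - (i : ℕ))) * (γ ^ 2 * (((i:ℕ)+1:ℝ) *
                ∑ j ∈ univ.filter (fun j => j ≤ i), (g i j)^2 * (z j)^2)) := this
          _ = γ ^ (2 * (n - 1 - (i : ℕ))) * ∑ j ∈ univ.filter (fun j => j ≤ i),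
                γ ^ 2 * (((i:ℕ)+1:ℝ) * ((g i j)^2 * (z j)^2)) := by
              rw [Finset.mul_sum, Finset.mul_sum]
    _ = ∑ j : Fin n, ∑ i ∈ univ.filter (fun i => j ≤ i),
          γ ^ (2 * (n - 1 - (i : ℕ))) * (γ ^ 2 * (((i:ℕ)+1 : ℝ) * ((g i j)^2 * (z j)^2))) := by
        simp_rw [Finset.sum_filter]
        exact Finset.sum_comm
    _ ≤ ∑ j : Fin n, ∑ i ∈ univ.filter (fun i => j ≤ i),
          ((g i j)^2 * (((i:ℕ)+1:ℝ)) / γ0 ^ (2 * ((i:ℕ) - (j:ℕ)))) *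
            (γ ^ 2 * (γ ^ (2 * (n - 1 - (j : ℕ))) * (z j)^2)) := by
        apply Finset.sum_le_sum
        intro j _
        apply Finset.sum_le_sum
        intro i hi
        have hji : j ≤ i := by simpa using hi
        have h2 := hkey i j hji
        have hc : (0:ℝ) ≤ γ ^ 2 * (((i:ℕ)+1:ℝ) * ((g i j)^2 * (z j)^2)) := by positivity
        calc γ ^ (2 * (n - 1 - (i : ℕ))) * (γ ^ 2 * (((i:ℕ)+1:ℝ) * ((g i j)^2 * (z j)^2)))
            ≤ (γ ^ (2 * (n - 1 - (j : ℕ))) / γ0 ^ (2 * ((i:ℕ) - (j:ℕ)))) *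
                (γ ^ 2 * (((i:ℕ)+1:ℝ) * ((g i j)^2 * (z j)^2))) :=
              mul_le_mul_of_nonneg_right h2 hc
          _ = ((g i j)^2 * (((i:ℕ)+1:ℝ)) / γ0 ^ (2 * ((i:ℕ) - (j:ℕ)))) *
                (γ ^ 2 * (γ ^ (2 * (n - 1 - (j : ℕ))) * (z j)^2)) := by ring
    _ = ∑ j : Fin n, (∑ i ∈ univ.filter (fun i => j ≤ i),
          (g i j)^2 * (((i:ℕ)+1:ℝ)) / γ0 ^ (2 * ((i:ℕ) - (j:ℕ)))) *
            (γ ^ 2 * (γ ^ (2 * (n - 1 - (j : ℕ))) * (z j)^2)) := by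
        apply Finset.sum_congr rfl
        intro j _
        rw [Finset.sum_mul]
    _ ≤ ∑ j : Fin n, d2 * (γ ^ 2 * (γ ^ (2 * (n - 1 - (j : ℕ))) * (z j)^2)) := by
        apply Finset.sum_le_sum
        intro j _
        apply mul_le_mul_of_nonneg_right _ (by positivity)
        rw [hd2]
        exact Finset.le_sup' (fun j : Fin n => ∑ i ∈ univ.filter (fun i => j ≤ i),
          (g i j) ^ 2 * (((i : ℕ) : ℝ) + 1) / γ0 ^ (2 * ((i : ℕ) - (j : ℕ))))
          (Finset.mem_univ j)
    _ = d2 * γ ^ 2 * ∑ j : Fin n, γ ^ (2 * (n - 1 - (j : ℕ))) * (z j) ^ 2 := by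
        rw [Finset.mul_sum]
        apply Finset.sum_congr rfl
        intro j _
        ring
end

section
/- Let A ∈ ℝ^{n×n} be the nilpotent upper-shift matrix (A_{i,i+1} = 1, all other entries 0), b = eₙ the last standard basis vector, and γ > 0. Suppose P(γ) is a positive definite solution of AᵀP + PA - P b bᵀ P = -γP. Then bᵀ P(γ) b = nγ. -/
/-!
Multiplying the Lyapunov equation on the left by `P⁻¹` and taking traces, the terms
`P⁻¹AᵀP` and `A` contribute `tr A = 0`, the quadratic term contributes
`tr (b bᵀ P) = bᵀ P b`, and the right-hand side contributes `-γ n`.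
-/

open Matrix

namespace Matrix

variable {ι R : Type*} [Fintype ι] [CommRing R]

theorem trace_vecMulVec_mul (b c : ι → R) (P : Matrix ι ι R) :
    (vecMulVec b c * P).trace = c ⬝ᵥ (P *ᵥ b) := by
  rw [vecMulVec_mul, trace_vecMulVec, dotProduct_comm, dotProduct_mulVec]

theorem dotProduct_mulVec_eq_of_lyapunov [DecidableEq ι] {A P : Matrix ι ι R} (hA : A.trace = 0)
    (hP : IsUnit P) {b : ι → R} {γ : R}
    (hPLE : Aᵀ * P + P * A - P * vecMulVec b b * P = -(γ • P)) :
    b ⬝ᵥ (P *ᵥ b) = Fintype.card ι * γ := by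
  have hdet : IsUnit P.det := (isUnit_iff_isUnit_det P).mp hP
  have htrace := congrArg (fun M => (P⁻¹ * M).trace) hPLE
  simp only [mul_sub, mul_add, mul_neg, Matrix.mul_smul, trace_sub, trace_add, trace_neg,
    trace_smul, ← mul_assoc P⁻¹, nonsing_inv_mul P hdet, one_mul, trace_conj' hP,
    trace_transpose, hA, trace_vecMulVec_mul, trace_one, smul_eq_mul] at htrace
  linear_combination -htrace

theorem trace_shift_eq_zero (n : ℕ) :
    (of fun i j : Fin n => if (i : ℕ) + 1 = (j : ℕ) then (1 : R) else 0).trace = 0 := by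
  simp [trace]

end Matrix

theorem stmt_7_general (n : ℕ) (γ : ℝ)
    (A : Matrix (Fin n) (Fin n) ℝ)
    (hA : A = Matrix.of fun i j : Fin n => if (i : ℕ) + 1 = (j : ℕ) then (1:ℝ) else 0)
    (b : Fin n → ℝ)
    (P : Matrix (Fin n) (Fin n) ℝ) (hP : P.PosDef)
    (hPLE : Aᵀ * P + P * A - P * Matrix.vecMulVec b b * P = -(γ • P)) :
    b ⬝ᵥ (P *ᵥ b) = n * γ := by
  have hA0 : A.trace = 0 := hA ▸ trace_shift_eq_zero n
  simpa using dotProduct_mulVec_eq_of_lyapunov hA0 hP.isUnit hPLE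

/-- for any positive definite solution `P` of the parametric
Lyapunov equation `AᵀP + PA - P b bᵀ P = -γP` (with `A` the upper-shift
nilpotent matrix and `b = eₙ`), one has `bᵀ P b = nγ`. -/
theorem stmt_7 (n : ℕ) (hn : 0 < n) (γ : ℝ) (hγ : 0 < γ)
    (A : Matrix (Fin n) (Fin n) ℝ)
    (hA : A = Matrix.of fun i j : Fin n => if (i : ℕ) + 1 = (j : ℕ) then (1:ℝ) else 0)
    (b : Fin n → ℝ) (hb : ∀ i, b i = if (i : ℕ) = n - 1 then (1:ℝ) else 0)
    (P : Matrix (Fin n) (Fin n) ℝ) (hP : P.PosDef)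
    (hPLE : Aᵀ * P + P * A - P * Matrix.vecMulVec b b * P = -(γ • P)) :
    b ⬝ᵥ (P *ᵥ b) = n * γ :=
  stmt_7_general n γ A hA b P hP hPLE
end

section
/- Let A ∈ ℝ^{n×n} be the upper-shift nilpotent matrix and b = eₙ. For γ > 0 let L_n(γ) = diag(γ^{n-1},…,γ,1). If P₁ is a positive definite solution of AᵀP₁ + P₁A - P₁ b bᵀ P₁ = -P₁ (the PLE with γ = 1), then P(γ) := γ L_n(γ) P₁ L_n(γ) is a positive definite solution of AᵀP + PA - P b bᵀ P = -γP. -/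
open Matrix

/-- scaling property of solutions of the parametric Lyapunov
equation: if `P₁ ≻ 0` solves the PLE with `γ = 1`, then
`P(γ) = γ L_n(γ) P₁ L_n(γ)` is a positive definite solution of
`AᵀP + PA - P b bᵀ P = -γP`. -/
theorem stmt_8 (n : ℕ) (hn : 0 < n) (γ : ℝ) (hγ : 0 < γ)
    (A : Matrix (Fin n) (Fin n) ℝ)
    (hA : A = Matrix.of fun i j : Fin n => if (i : ℕ) + 1 = (j : ℕ) then (1:ℝ) else 0)
    (b : Fin n → ℝ) (hb : ∀ i, b i = if (i : ℕ) = n - 1 then (1:ℝ) else 0)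
    (L : Matrix (Fin n) (Fin n) ℝ)
    (hL : L = Matrix.diagonal fun i : Fin n => γ ^ (n - 1 - (i : ℕ)))
    (P₁ : Matrix (Fin n) (Fin n) ℝ) (hP₁ : P₁.PosDef)
    (hPLE1 : Aᵀ * P₁ + P₁ * A - P₁ * Matrix.vecMulVec b b * P₁ = -P₁)
    (P : Matrix (Fin n) (Fin n) ℝ) (hP : P = γ • (L * P₁ * L)) :
    P.PosDef ∧ Aᵀ * P + P * A - P * Matrix.vecMulVec b b * P = -(γ • P) := by
  have hLsymm : Lᵀ = L := by rw [hL, Matrix.diagonal_transpose]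
  -- key commutation relations
  have h1 : Aᵀ * L = γ • (L * Aᵀ) := by
    subst hA hL
    ext i j
    simp only [Matrix.smul_apply, Matrix.mul_diagonal, Matrix.diagonal_mul,
      Matrix.transpose_apply, Matrix.of_apply, smul_eq_mul]
    rcases eq_or_ne ((j : ℕ) + 1) (i : ℕ) with h | h
    · simp only [h, if_pos rfl]
      have hj : (j : ℕ) ≤ n - 1 := by omega
      have : n - 1 - (j : ℕ) = (n - 1 - (i : ℕ)) + 1 := by omega
      rw [this, pow_succ]
      ring
    · simp [h]
  have h2 : L * A = γ • (A * L) := by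
    subst hA hL
    ext i j
    simp only [Matrix.smul_apply, Matrix.mul_diagonal, Matrix.diagonal_mul,
      Matrix.of_apply, smul_eq_mul]
    rcases eq_or_ne ((i : ℕ) + 1) (j : ℕ) with h | h
    · simp only [h, if_pos rfl]
      have : n - 1 - (i : ℕ) = (n - 1 - (j : ℕ)) + 1 := by omega
      rw [this, pow_succ]
      ring
    · simp [h]
  have h3 : L * Matrix.vecMulVec b b = Matrix.vecMulVec b b := by
    subst hL
    ext i j
    simp only [Matrix.diagonal_mul, Matrix.vecMulVec_apply, hb]
    rcases eq_or_ne ((i : ℕ)) (n - 1) with h | h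
    · simp [h]
    · simp [h]
  have h4 : Matrix.vecMulVec b b * L = Matrix.vecMulVec b b := by
    subst hL
    ext i j
    simp only [Matrix.mul_diagonal, Matrix.vecMulVec_apply, hb]
    rcases eq_or_ne ((j : ℕ)) (n - 1) with h | h
    · simp [h]
    · simp [h]
  constructor
  · -- positive definiteness
    subst hP
    have hHerm : (γ • (L * P₁ * L)).IsHermitian := by
      unfold Matrix.IsHermitian
      rw [Matrix.conjTranspose_smul, Matrix.conjTranspose_mul, Matrix.conjTranspose_mul,
        Matrix.conjTranspose_eq_transpose_of_trivial, hLsymm, hP₁.isHermitian.eq, mul_assoc, star_trivial]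
    refine Matrix.PosDef.of_dotProduct_mulVec_pos hHerm fun x hx => ?_
    have hLx : L *ᵥ x ≠ 0 := by
      intro hzero
      apply hx
      funext i
      have := congrFun hzero i
      rw [hL] at this
      simp only [Matrix.mulVec_diagonal, Pi.zero_apply] at this
      have hne : γ ^ (n - 1 - (i : ℕ)) ≠ 0 := pow_ne_zero _ (ne_of_gt hγ)
      exact (mul_eq_zero.mp this).resolve_left hne
    have key : star x ⬝ᵥ (γ • (L * P₁ * L)) *ᵥ x
        = γ * (star (L *ᵥ x) ⬝ᵥ P₁ *ᵥ (L *ᵥ x)) := by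
      rw [Matrix.smul_mulVec, dotProduct_smul, smul_eq_mul]
      congr 1
      rw [← Matrix.mulVec_mulVec, ← Matrix.mulVec_mulVec]
      rw [Matrix.dotProduct_mulVec]
      congr 1
      show star x ᵥ* L = star (L *ᵥ x)
      rw [star_trivial, star_trivial, ← Matrix.mulVec_transpose, hLsymm]
    rw [key]
    exact mul_pos hγ (hP₁.dotProduct_mulVec_pos hLx)
  · -- the matrix equation
    subst hP
    have e1 : Aᵀ * (γ • (L * P₁ * L)) = (γ * γ) • (L * (Aᵀ * P₁) * L) := by
      rw [Matrix.mul_smul]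
      rw [show Aᵀ * (L * P₁ * L) = (Aᵀ * L) * (P₁ * L) by noncomm_ring]
      rw [h1, Matrix.smul_mul, smul_smul]
      congr 1
      noncomm_ring
    have e2 : (γ • (L * P₁ * L)) * A = (γ * γ) • (L * (P₁ * A) * L) := by
      rw [Matrix.smul_mul]
      rw [show L * P₁ * L * A = (L * P₁) * (L * A) by noncomm_ring]
      rw [h2, Matrix.mul_smul, smul_smul]
      congr 1
      noncomm_ring
    have e3 : (γ • (L * P₁ * L)) * Matrix.vecMulVec b b * (γ • (L * P₁ * L))
        = (γ * γ) • (L * (P₁ * Matrix.vecMulVec b b * P₁) * L) := by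
      rw [Matrix.smul_mul, Matrix.smul_mul, Matrix.mul_smul, smul_smul]
      congr 1
      calc L * P₁ * L * Matrix.vecMulVec b b * (L * P₁ * L)
          = (L * P₁) * (L * Matrix.vecMulVec b b) * (L * P₁ * L) := by noncomm_ring
        _ = (L * P₁) * (Matrix.vecMulVec b b * L) * (P₁ * L) := by rw [h3]; noncomm_ring
        _ = L * (P₁ * Matrix.vecMulVec b b * P₁) * L := by rw [h4]; noncomm_ring
    have hsum : L * (Aᵀ * P₁) * L + L * (P₁ * A) * L
          - L * (P₁ * Matrix.vecMulVec b b * P₁) * L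
        = L * (Aᵀ * P₁ + P₁ * A - P₁ * Matrix.vecMulVec b b * P₁) * L := by noncomm_ring
    rw [e1, e2, e3, ← smul_add, ← smul_sub, hsum, hPLE1]
    simp [Matrix.mul_neg, Matrix.neg_mul, smul_smul]
end

section
/- Let A be the n×n upper-shift nilpotent matrix, c = e₁ᵀ the first standard basis row vector, and γ > 0. If Q₁ is a positive definite solution of A Q₁ + Q₁ Aᵀ - Q₁ cᵀ c Q₁ = -Q₁, then Q(γ) := γ^{2n-1} L_n(γ)^{-1} Q₁ L_n(γ)^{-1} is a positive definite solution of A Q + Q Aᵀ - Q cᵀ c Q = -γ Q, where L_n(γ) = diag(γ^{n-1},…,γ,1). -/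
open Matrix

/-- scaling property of solutions of the dual parametric Lyapunov
equation: if `Q₁ ≻ 0` solves `AQ₁ + Q₁Aᵀ - Q₁cᵀcQ₁ = -Q₁`, then
`Q(γ) = γ^{2n-1} L_n(γ)⁻¹ Q₁ L_n(γ)⁻¹` is a positive definite solution of
`AQ + QAᵀ - QcᵀcQ = -γQ`, where `c = e₁ᵀ`. -/
theorem stmt_9 (n : ℕ) (hn : 0 < n) (γ : ℝ) (hγ : 0 < γ)
    (A : Matrix (Fin n) (Fin n) ℝ)
    (hA : A = Matrix.of fun i j : Fin n => if (i : ℕ) + 1 = (j : ℕ) then (1:ℝ) else 0)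
    (c : Fin n → ℝ) (hc : ∀ i, c i = if (i : ℕ) = 0 then (1:ℝ) else 0)
    (Linv : Matrix (Fin n) (Fin n) ℝ)
    (hLinv : Linv = Matrix.diagonal fun i : Fin n => (γ ^ (n - 1 - (i : ℕ)))⁻¹)
    (Q₁ : Matrix (Fin n) (Fin n) ℝ) (hQ₁ : Q₁.PosDef)
    (hPLE1 : A * Q₁ + Q₁ * Aᵀ - Q₁ * Matrix.vecMulVec c c * Q₁ = -Q₁)
    (Q : Matrix (Fin n) (Fin n) ℝ)
    (hQ : Q = γ ^ (2 * n - 1) • (Linv * Q₁ * Linv)) :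
    Q.PosDef ∧ A * Q + Q * Aᵀ - Q * Matrix.vecMulVec c c * Q = -(γ • Q) := by
  have hγ0 : γ ≠ 0 := ne_of_gt hγ
  set k : ℝ := γ ^ (2 * n - 1) with hk
  have hkpos : 0 < k := pow_pos hγ _
  set M : Matrix (Fin n) (Fin n) ℝ := Matrix.vecMulVec c c with hM
  set e : ℝ := (γ ^ (n - 1))⁻¹ with he
  have hLsym : Linvᵀ = Linv := by rw [hLinv, Matrix.diagonal_transpose]
  -- commutation relations
  have h1 : A * Linv = γ • (Linv * A) := by
    subst hA hLinv
    ext i j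
    simp only [Matrix.mul_diagonal, Matrix.diagonal_mul, Matrix.smul_apply, Matrix.of_apply,
      smul_eq_mul]
    by_cases h : (i : ℕ) + 1 = (j : ℕ)
    · have hj : (j : ℕ) < n := j.isLt
      have : n - 1 - (i : ℕ) = (n - 1 - (j : ℕ)) + 1 := by omega
      rw [if_pos h, this, pow_succ]
      field_simp
    · simp [h]
  have h2 : Linv * Aᵀ = γ • (Aᵀ * Linv) := by
    have := congrArg Matrix.transpose h1
    simpa only [Matrix.transpose_mul, Matrix.transpose_smul, hLsym] using this
  have h3 : Linv * M = e • M := by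
    rw [hLinv, hM, he]
    ext i j
    simp only [Matrix.diagonal_mul, Matrix.smul_apply, Matrix.vecMulVec_apply, hc,
      smul_eq_mul]
    by_cases h : (i : ℕ) = 0
    · simp [h]
    · simp [h]
  have h4 : M * Linv = e • M := by
    have := congrArg Matrix.transpose h3
    have hMs : Mᵀ = M := by
      rw [hM]; ext i j; simp [Matrix.vecMulVec_apply, mul_comm]
    simpa only [Matrix.transpose_mul, Matrix.transpose_smul, hLsym, hMs] using this
  -- the three terms
  have t1 : A * Q = (k * γ) • (Linv * (A * Q₁) * Linv) := by
    rw [hQ, Matrix.mul_smul,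
      show Linv * Q₁ * Linv = Linv * (Q₁ * Linv) from mul_assoc _ _ _,
      ← mul_assoc A Linv _, h1, Matrix.smul_mul, smul_smul]
    congr 1
    noncomm_ring
  have t2 : Q * Aᵀ = (k * γ) • (Linv * (Q₁ * Aᵀ) * Linv) := by
    rw [hQ, Matrix.smul_mul, mul_assoc, mul_assoc, h2, Matrix.mul_smul, Matrix.mul_smul,
      smul_smul]
    congr 1
    noncomm_ring
  have hcoef : k * k * (e * e) = k * γ := by
    rw [hk, he]
    rw [← pow_add, ← mul_inv, ← pow_add]
    rw [eq_comm]
    have h2n : 2 * n - 1 + 1 = 2 * n := by omega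
    have : γ ^ (2 * n - 1 + (2 * n - 1)) = γ ^ (2 * n - 1) * γ * γ ^ (n - 1 + (n - 1)) := by
      rw [← pow_succ, ← pow_add]
      congr 1
      omega
    rw [this]
    field_simp
  have t3 : Q * M * Q = (k * γ) • (Linv * (Q₁ * M * Q₁) * Linv) := by
    have e1 : (Linv * Q₁ * Linv) * M = e • (Linv * Q₁ * M) := by
      rw [mul_assoc, h3, Matrix.mul_smul, mul_assoc]
    have e2 : (Linv * Q₁ * M) * (Linv * Q₁ * Linv) = e • (Linv * (Q₁ * M * Q₁) * Linv) := by
      calc (Linv * Q₁ * M) * (Linv * Q₁ * Linv)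
          = (Linv * Q₁) * ((M * Linv) * (Q₁ * Linv)) := by noncomm_ring
        _ = (Linv * Q₁) * ((e • M) * (Q₁ * Linv)) := by rw [h4]
        _ = e • (Linv * (Q₁ * M * Q₁) * Linv) := by
            rw [Matrix.smul_mul, Matrix.mul_smul]
            congr 1
            noncomm_ring
    have key : (Linv * Q₁ * Linv) * M * (Linv * Q₁ * Linv)
        = (e * e) • (Linv * (Q₁ * M * Q₁) * Linv) := by
      rw [e1, Matrix.smul_mul, e2, smul_smul]
    rw [hQ, Matrix.smul_mul, Matrix.mul_smul, Matrix.smul_mul, smul_smul, key, smul_smul]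
    rw [hcoef]
  -- positive definiteness
  have hQpd : Q.PosDef := by
    refine Matrix.PosDef.of_dotProduct_mulVec_pos ?_ ?_
    · -- Hermitian
      rw [hQ]
      have : (Linv * Q₁ * Linv)ᴴ = Linv * Q₁ * Linv := by
        rw [Matrix.conjTranspose_mul, Matrix.conjTranspose_mul]
        have hQ1h := hQ₁.isHermitian
        simp only [Matrix.IsHermitian] at hQ1h
        have hLh : Linvᴴ = Linv := by
          rw [Matrix.conjTranspose_eq_transpose_of_trivial, hLsym]
        rw [hLh, hQ1h, mul_assoc]
      unfold Matrix.IsHermitian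
      rw [Matrix.conjTranspose_smul, this]
      congr 1
    · intro x hx
      have hLx : Linv *ᵥ x ≠ 0 := by
        intro h0
        apply hx
        funext i
        have := congrFun h0 i
        rw [hLinv, Matrix.mulVec_diagonal] at this
        have hne : (γ ^ (n - 1 - (i : ℕ)))⁻¹ ≠ 0 := inv_ne_zero (pow_ne_zero _ hγ0)
        simpa [hne] using this
      have hpos := hQ₁.dotProduct_mulVec_pos hLx
      rw [hQ]
      simp only [Matrix.smul_mulVec, dotProduct_smul, RCLike.smul_re]
      have : star x ⬝ᵥ (Linv * Q₁ * Linv) *ᵥ x = star (Linv *ᵥ x) ⬝ᵥ Q₁ *ᵥ (Linv *ᵥ x) := by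
        rw [← Matrix.mulVec_mulVec, ← Matrix.mulVec_mulVec]
        rw [Matrix.dotProduct_mulVec (star x) Linv]
        congr 1
        funext i
        simp [hLinv, Matrix.vecMul_diagonal, Matrix.mulVec_diagonal, mul_comm]
      rw [this] at *
      simpa using mul_pos hkpos (by simpa using hpos)
  refine ⟨hQpd, ?_⟩
  rw [t1, t2, t3, ← smul_add, ← smul_sub]
  have hsum : Linv * (A * Q₁) * Linv + Linv * (Q₁ * Aᵀ) * Linv - Linv * (Q₁ * M * Q₁) * Linv
      = Linv * (A * Q₁ + Q₁ * Aᵀ - Q₁ * M * Q₁) * Linv := by noncomm_ring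
  rw [hsum, hPLE1, hQ, Matrix.mul_neg, Matrix.neg_mul, smul_neg, smul_smul]
  rw [mul_comm γ k]
end

section
/- Let A be the n×n upper-shift nilpotent matrix, c = e₁ᵀ, γ > 0, and Q(γ) a positive definite solution of AQ + QAᵀ - Q cᵀ c Q = -γQ. Then c Q(γ) cᵀ = nγ. -/
open Matrix

/-! Multiplying the Riccati-type Lyapunov equation on the right by `Q⁻¹` turns it into
`A + Q Aᵀ Q⁻¹ - Q cᵀ c = -γ I`. Taking traces, conjugation invariance gives
`tr (Q Aᵀ Q⁻¹) = tr A`, and `tr (Q cᵀ c) = c Q cᵀ`, so `c Q cᵀ = 2 tr A + n γ`;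
the shift matrix has zero trace. -/

namespace Matrix

variable {R ι : Type*} [CommRing R] [Fintype ι]

theorem trace_mul_vecMulVec_self (Q : Matrix ι ι R) (c : ι → R) :
    (Q * vecMulVec c c).trace = c ⬝ᵥ (Q *ᵥ c) := by
  rw [mul_vecMulVec, trace_vecMulVec, dotProduct_comm]

theorem dotProduct_mulVec_of_lyapunov [DecidableEq ι] {A Q : Matrix ι ι R} {c : ι → R} {γ : R}
    (hQ : IsUnit Q)
    (h : A * Q + Q * Aᵀ - Q * vecMulVec c c * Q = -(γ • Q)) :
    c ⬝ᵥ (Q *ᵥ c) = 2 * A.trace + Fintype.card ι * γ := by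
  have hQQ : Q * Q⁻¹ = 1 := mul_nonsing_inv Q ((isUnit_iff_isUnit_det Q).mp hQ)
  have h' : A + Q * Aᵀ * Q⁻¹ - Q * vecMulVec c c = -(γ • 1) := by
    simpa only [sub_mul, add_mul, Matrix.mul_assoc, hQQ, Matrix.mul_one, Matrix.neg_mul,
      Matrix.smul_mul] using congrArg (· * Q⁻¹) h
  have htr := congrArg trace h'
  rw [trace_sub, trace_add, trace_conj hQ, trace_transpose, trace_mul_vecMulVec_self, trace_neg,
    trace_smul, trace_one, smul_eq_mul] at htr
  linear_combination -htr

end Matrix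

theorem stmt_10_general (n : ℕ) (γ : ℝ)
    (A : Matrix (Fin n) (Fin n) ℝ)
    (hA : A = Matrix.of fun i j : Fin n => if (i : ℕ) + 1 = (j : ℕ) then (1:ℝ) else 0)
    (c : Fin n → ℝ)
    (Q : Matrix (Fin n) (Fin n) ℝ) (hQ : Q.PosDef)
    (hPLE : A * Q + Q * Aᵀ - Q * Matrix.vecMulVec c c * Q = -(γ • Q)) :
    c ⬝ᵥ (Q *ᵥ c) = n * γ := by
  have hA₀ : A.trace = 0 := by simp [hA, trace]
  rw [dotProduct_mulVec_of_lyapunov hQ.isUnit hPLE, hA₀, Fintype.card_fin]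
  ring

/-- for any positive definite solution `Q` of the dual parametric
Lyapunov equation `AQ + QAᵀ - QcᵀcQ = -γQ` (with `c = e₁ᵀ`), `c Q cᵀ = nγ`. -/
theorem stmt_10 (n : ℕ) (hn : 0 < n) (γ : ℝ) (hγ : 0 < γ)
    (A : Matrix (Fin n) (Fin n) ℝ)
    (hA : A = Matrix.of fun i j : Fin n => if (i : ℕ) + 1 = (j : ℕ) then (1:ℝ) else 0)
    (c : Fin n → ℝ) (hc : ∀ i, c i = if (i : ℕ) = 0 then (1:ℝ) else 0)
    (Q : Matrix (Fin n) (Fin n) ℝ) (hQ : Q.PosDef)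
    (hPLE : A * Q + Q * Aᵀ - Q * Matrix.vecMulVec c c * Q = -(γ • Q)) :
    c ⬝ᵥ (Q *ᵥ c) = n * γ :=
  stmt_10_general n γ A hA c Q hQ hPLE
end
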